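/- Let r_h > 0 and G > 0 be real numbers, and let B', F, F', R_h, f_h be real numbers (the horizon values of the lapse derivative, f'(R), its radial derivative, the Ricci scalar, and f(R), respectively). Define the horizon temperature T = B'/(4π), the horizon radial pressure P by 8πG·P = F·(B'/r_h − 1/r_h²) − (1/2)·B'·F' − (1/2)·(R_h·F − f_h), the energy coefficient c_E = (1/(2G))·[F + (r_h²/2)·(R_h·F − f_h)], the entropy coefficient c_S = (π/G)·(2·r_h·F + r_h²·F'), the volume coefficient c_V = 4π·r_h², and the additional-entropy coefficient c_I = −(r_h²·B'·F')/(2G). Then c_E = T·c_S − P·c_V + c_I. -/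

import Mathlib

open Real

/-!
Both `T·c_S` and `P·c_V` are computed over the common denominator `4G`, using
`r_h² · (F / r_h²) = F` for the pressure. The `r_h B' F` terms then cancel, the two
`r_h² B' F'` terms add up to exactly `−c_I`, and what remains is `c_E`.
-/

theorem temperature_mul_entropyCoeff (G B' F F' r : ℝ) :
    B' / (4 * π) * ((π / G) * (2 * r * F + r ^ 2 * F')) =
      (2 * r * B' * F + r ^ 2 * B' * F') / (4 * G) := by
  field_simp

theorem pressure_mul_volumeCoeff {r G P B' F F' R f : ℝ} (hr : r ≠ 0) (hG : G ≠ 0)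
    (hP : 8 * π * G * P =
      F * (B' / r - 1 / r ^ 2) - (1 / 2) * B' * F' - (1 / 2) * (R * F - f)) :
    P * (4 * π * r ^ 2) =
      (2 * r * B' * F - 2 * F - r ^ 2 * B' * F' - r ^ 2 * (R * F - f)) / (4 * G) := by
  calc P * (4 * π * r ^ 2) = r ^ 2 / (2 * G) * (8 * π * G * P) := by field_simp; ring
    _ = _ := by
      rw [hP]
      field_simp
      ring

/-- Horizon first law for static spherically symmetric black holes in f(R) gravity,
stated as an identity among the coefficients of dr_h:
c_E = T·c_S − P·c_V + c_I. -/
theorem horizon_first_law_coefficients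
    (r_h G B' F F' R_h f_h T P c_E c_S c_V c_I : ℝ)
    (hr : r_h > 0) (hG : G > 0)
    (hT : T = B' / (4 * π))
    (hP : 8 * π * G * P =
      F * (B' / r_h - 1 / r_h ^ 2) - (1 / 2) * B' * F' - (1 / 2) * (R_h * F - f_h))
    (hE : c_E = (1 / (2 * G)) * (F + (r_h ^ 2 / 2) * (R_h * F - f_h)))
    (hS : c_S = (π / G) * (2 * r_h * F + r_h ^ 2 * F'))
    (hV : c_V = 4 * π * r_h ^ 2)
    (hI : c_I = -(r_h ^ 2 * B' * F') / (2 * G)) :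
    c_E = T * c_S - P * c_V + c_I := by
  rw [hT, hS, hV, temperature_mul_entropyCoeff, pressure_mul_volumeCoeff hr.ne' hG.ne' hP, hE, hI]
  field_simp
  ring
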